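/- arXiv:nlin/0305001 — 4 statements merged into one kernel-verified Lean document; each statement's English description precedes it below -/
import Mathlib

section
/- For a partition λ with Frobenius coordinates (α₁,…,α_k | β₁,…,β_k) and any a ∈ ℂ, the content product (a)_λ := ∏_{(i,j)∈λ} (a + j - i) satisfies (a)_λ = ∏_{i=1}^k (-1)^{β_i} (a)_{α_i+1} (1-a)_{β_i}, where (a)_n = a(a+1)⋯(a+n-1) is the Pochhammer symbol. -/
/-- The conjugate (transpose) partition: `λ'_j = #{i ≥ 1 | λ_i ≥ j}`. -/
noncomputable def conjP (p : ℕ → ℕ) (j : ℕ) : ℕ := Nat.card {i : ℕ | 1 ≤ i ∧ j ≤ p i}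

/-- The number of diagonal nodes of the Young diagram, i.e. the Frobenius rank `r`. -/
noncomputable def frobRank (p : ℕ → ℕ) : ℕ := Nat.card {i : ℕ | 1 ≤ i ∧ i ≤ p i}

/-- `p` (indexed from 1) is a partition: weakly decreasing, finitely many nonzero parts. -/
def IsPartition (p : ℕ → ℕ) : Prop :=
  (∀ i j, 1 ≤ i → i ≤ j → p j ≤ p i) ∧ (∃ N, ∀ i, N < i → p i = 0)

open Finset Polynomial

private lemma asc_prod (n : ℕ) (a : ℂ) :
    (ascPochhammer ℂ n).eval a = ∏ i ∈ range n, (a + i) := by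
  induction n with
  | zero => simp
  | succ n ih => rw [ascPochhammer_succ_right, prod_range_succ, ← ih]; simp

/-- shift: product over `Icc (m+1) n` equals product over `Icc 1 (n-m)` of shifted function -/
private lemma prod_shift (m n : ℕ) (g : ℕ → ℂ) :
    ∏ j ∈ Icc (m + 1) n, g j = ∏ j ∈ Icc 1 (n - m), g (j + m) := by
  have h : Finset.Icc (m+1) n = (Finset.Icc 1 (n - m)).map ⟨(· + m), add_left_injective m⟩ := by
    ext x; simp only [mem_Icc, Finset.mem_map, Function.Embedding.coeFn_mk]
    constructor
    · intro hx; exact ⟨x - m, by omega, by omega⟩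
    · rintro ⟨y, hy, rfl⟩; omega
  rw [h, Finset.prod_map]; rfl

private lemma icc_range (n : ℕ) (g : ℕ → ℂ) :
    ∏ j ∈ Icc 1 n, g j = ∏ j ∈ range n, g (j + 1) := by
  have h : Finset.Icc 1 n = (Finset.range n).map ⟨(· + 1), add_left_injective 1⟩ := by
    ext x; simp only [mem_Icc, Finset.mem_map, Function.Embedding.coeFn_mk, Finset.mem_range]
    constructor
    · intro hx; exact ⟨x - 1, by omega, by omega⟩
    · rintro ⟨y, hy, rfl⟩; omega
  rw [h, Finset.prod_map]; rfl

private lemma downward_card (S : Set ℕ) (N : ℕ)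
    (hd : ∀ i j, 1 ≤ i → i ≤ j → j ∈ S → i ∈ S)
    (hb : ∀ i ∈ S, 1 ≤ i ∧ i ≤ N) (i : ℕ) :
    i ∈ S ↔ 1 ≤ i ∧ i ≤ Nat.card S := by
  have hfin : S.Finite := Set.Finite.subset (Set.finite_Icc 1 N)
    (fun x hx => Set.mem_Icc.mpr (hb x hx))
  have hcard : Nat.card S = hfin.toFinset.card := by
    rw [Nat.card_coe_set_eq, Set.ncard_eq_toFinset_card _ hfin]
  constructor
  · intro hi
    refine ⟨(hb i hi).1, ?_⟩
    have hsub : Finset.Icc 1 i ⊆ hfin.toFinset := by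
      intro j hj
      rw [Set.Finite.mem_toFinset]
      have hj' := Finset.mem_Icc.mp hj
      exact hd j i hj'.1 hj'.2 hi
    have := Finset.card_le_card hsub
    rw [Nat.card_Icc] at this
    omega
  · rintro ⟨h1, h2⟩
    by_contra hi
    have hsub : hfin.toFinset ⊆ Finset.Icc 1 (i - 1) := by
      intro j hj
      rw [Set.Finite.mem_toFinset] at hj
      have hbj := hb j hj
      rw [Finset.mem_Icc]
      refine ⟨hbj.1, ?_⟩
      by_contra hji
      exact hi (hd i j h1 (by omega) hj)
    have := Finset.card_le_card hsub
    rw [Nat.card_Icc] at this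
    omega

private lemma conjP_char (p : ℕ → ℕ) (N : ℕ)
    (hmono : ∀ i j, 1 ≤ i → i ≤ j → p j ≤ p i) (hN : ∀ i, N < i → p i = 0)
    {j : ℕ} (hj : 1 ≤ j) (i : ℕ) :
    (1 ≤ i ∧ j ≤ p i) ↔ (1 ≤ i ∧ i ≤ conjP p j) := by
  have := downward_card {i : ℕ | 1 ≤ i ∧ j ≤ p i} N
    (fun i i' hi hii' hi' => ⟨hi, le_trans hi'.2 (hmono i i' hi hii')⟩)
    (fun i hi => by
      obtain ⟨h1, h2⟩ := hi
      refine ⟨h1, ?_⟩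
      by_contra h
      have := hN i (by omega); omega) i
  exact this

private lemma frob_char (p : ℕ → ℕ) (N : ℕ)
    (hmono : ∀ i j, 1 ≤ i → i ≤ j → p j ≤ p i) (hN : ∀ i, N < i → p i = 0) (i : ℕ) :
    (1 ≤ i ∧ i ≤ p i) ↔ (1 ≤ i ∧ i ≤ frobRank p) := by
  have := downward_card {i : ℕ | 1 ≤ i ∧ i ≤ p i} N
    (fun i i' hi hii' hi' => ⟨hi, le_trans (le_trans hii' hi'.2) (hmono i i' hi hii')⟩)
    (fun i hi => by
      obtain ⟨h1, h2⟩ := hi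
      refine ⟨h1, ?_⟩
      by_contra h
      have := hN i (by omega); omega) i
  exact this

private lemma main_ind (k : ℕ) : ∀ (p : ℕ → ℕ) (N : ℕ),
    (∀ i j, 1 ≤ i → i ≤ j → p j ≤ p i) → (∀ i, N < i → p i = 0) →
    frobRank p = k → ∀ a : ℂ,
    (∏ i ∈ Icc 1 N, ∏ j ∈ Icc 1 (p i), (a + (j : ℂ) - (i : ℂ))) =
      ∏ i ∈ Icc 1 k,
        ((-1 : ℂ) ^ (conjP p i - i) *
          (ascPochhammer ℂ (p i - i + 1)).eval a *
          (ascPochhammer ℂ (conjP p i - i)).eval (1 - a)) := by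
  induction k with
  | zero =>
    intro p N hmono hN hk a
    have hp1 : p 1 = 0 := by
      by_contra h
      have := (frob_char p N hmono hN 1).mp ⟨le_rfl, by omega⟩
      omega
    have hz : ∀ i ∈ Icc 1 N, ∏ j ∈ Icc 1 (p i), (a + (j : ℂ) - (i : ℂ)) = 1 := by
      intro i hi
      have hpi : p i = 0 := by
        have := hmono 1 i le_rfl (mem_Icc.mp hi).1
        omega
      simp [hpi]
    rw [prod_congr rfl hz]
    simp
  | succ k ih =>
    intro p N hmono hN hk a
    have hfc := frob_char p N hmono hN
    have hp1 : 1 ≤ p 1 := by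
      have := (hfc 1).mpr ⟨le_rfl, by omega⟩; exact this.2
    have hcc := conjP_char p N hmono hN (le_refl 1)
    set c := conjP p 1 with hc
    have hc1 : 1 ≤ c := ((hcc 1).mp ⟨le_rfl, hp1⟩).2
    have hcN : c ≤ N := by
      have hmem := (hcc c).mpr ⟨hc1, le_rfl⟩
      by_contra h
      have := hN c (by omega)
      omega
    have hN1 : 1 ≤ N := le_trans hc1 hcN
    set q : ℕ → ℕ := fun i => p (i + 1) - 1 with hq
    have hqmono : ∀ i j, 1 ≤ i → i ≤ j → q j ≤ q i := by
      intro i j hi hij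
      exact Nat.sub_le_sub_right (hmono (i+1) (j+1) (by omega) (by omega)) 1
    have hqN : ∀ i, N < i → q i = 0 := by
      intro i hi
      have : p (i + 1) = 0 := hN (i + 1) (by omega)
      simp [hq, this]
    have hqfc := frob_char q N hqmono hqN
    have keyf : ∀ i, (1 ≤ i ∧ i ≤ q i) ↔ (1 ≤ i ∧ i ≤ k) := by
      intro i
      have hA := hfc (i + 1)
      rw [hk] at hA
      show (1 ≤ i ∧ i ≤ p (i + 1) - 1) ↔ _
      omega
    have hqfrob : frobRank q = k := by
      have e1 := hqfc (frobRank q)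
      have e2 := hqfc k
      have e3 := keyf (frobRank q)
      have e4 := keyf k
      omega
    have hple : ∀ i, 1 ≤ i → i ≤ k + 1 → i ≤ p i := by
      intro i hi1 hi2
      exact ((hfc i).mpr ⟨hi1, by omega⟩).2
    have hcge : ∀ i, 1 ≤ i → i ≤ k + 1 → i ≤ conjP p i := by
      intro i hi1 hi2
      exact ((conjP_char p N hmono hN hi1 i).mp ⟨hi1, hple i hi1 hi2⟩).2
    have hqconj : ∀ j, 1 ≤ j → j ≤ k → conjP q j = conjP p (j + 1) - 1 := by
      intro j hj1 hj2
      have hB := conjP_char q N hqmono hqN hj1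
      have hcp : j + 1 ≤ conjP p (j + 1) := hcge (j + 1) (by omega) (by omega)
      have key : ∀ i, (1 ≤ i ∧ j ≤ q i) ↔ (1 ≤ i ∧ i ≤ conjP p (j + 1) - 1) := by
        intro i
        have hA := conjP_char p N hmono hN (j := j + 1) (by omega) (i + 1)
        show (1 ≤ i ∧ j ≤ p (i + 1) - 1) ↔ _
        omega
      have e1 := hB (conjP q j)
      have e2 := hB (conjP p (j + 1) - 1)
      have e3 := key (conjP q j)
      have e4 := key (conjP p (j + 1) - 1)
      omega
    -- LHS: split off row 1
    have hsplit1 : Finset.Icc 1 N = insert 1 (Finset.Icc 2 N) := by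
      ext x; simp only [mem_Icc, Finset.mem_insert]; omega
    rw [hsplit1, Finset.prod_insert (by simp)]
    -- rows 2..N: split off column 1
    have hrowsplit : ∀ i ∈ Icc 2 N,
        (∏ j ∈ Icc 1 (p i), (a + (j : ℂ) - (i : ℂ))) =
        (if 1 ≤ p i then (a + 1 - (i : ℂ)) else 1) *
          ∏ j ∈ Icc 2 (p i), (a + (j : ℂ) - (i : ℂ)) := by
      intro i _
      by_cases h0 : 1 ≤ p i
      case neg =>
        have hz : p i = 0 := by omega
        simp [hz]
      case pos =>
        have heq : Finset.Icc 1 (p i) = insert 1 (Finset.Icc 2 (p i)) := by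
          ext x; simp only [mem_Icc, Finset.mem_insert]; omega
        rw [heq, Finset.prod_insert (by simp), if_pos h0]
        norm_num
    rw [prod_congr rfl hrowsplit, prod_mul_distrib]
    -- column part
    have hcol : (∏ i ∈ Icc 2 N, (if 1 ≤ p i then (a + 1 - (i : ℂ)) else 1)) =
        ∏ i ∈ Icc 2 c, (a + 1 - (i : ℂ)) := by
      have step : ∀ i ∈ Icc 2 N, (if 1 ≤ p i then (a + 1 - (i : ℂ)) else 1) =
          (if i ∈ Icc 2 c then (a + 1 - (i : ℂ)) else 1) := by
        intro i hi
        have hi' := mem_Icc.mp hi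
        have h1 := hcc i
        by_cases h : 1 ≤ p i
        · rw [if_pos h, if_pos (mem_Icc.mpr ⟨hi'.1, by omega⟩)]
        · rw [if_neg h, if_neg (by rw [mem_Icc]; omega)]
      rw [prod_congr rfl step, Finset.prod_ite_mem]
      congr 1
      ext x; simp only [Finset.mem_inter, mem_Icc]; omega
    rw [hcol]
    -- rest part: reindex to q
    have hrest : (∏ i ∈ Icc 2 N, ∏ j ∈ Icc 2 (p i), (a + (j : ℂ) - (i : ℂ))) =
        ∏ i ∈ Icc 1 N, ∏ j ∈ Icc 1 (q i), (a + (j : ℂ) - (i : ℂ)) := by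
      simp only [hq]
      have h1 : (∏ i ∈ Icc 2 N, ∏ j ∈ Icc 2 (p i), (a + (j : ℂ) - (i : ℂ))) =
          ∏ i ∈ Icc 1 (N - 1), ∏ j ∈ Icc 1 (p (i + 1) - 1), (a + (j : ℂ) - (i : ℂ)) := by
        rw [show (2 : ℕ) = 1 + 1 from rfl,
          prod_shift 1 N (fun i => ∏ j ∈ Icc (1 + 1) (p i), (a + (j : ℂ) - (i : ℂ)))]
        apply prod_congr rfl
        intro i _
        rw [prod_shift 1 (p (i + 1)) (fun j => (a + (j : ℂ) - ((i + 1 : ℕ) : ℂ)))]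
        apply prod_congr rfl
        intro j _
        push_cast
        ring
      rw [h1]
      have h2 : Finset.Icc 1 N = insert N (Finset.Icc 1 (N - 1)) := by
        ext x; simp only [mem_Icc, Finset.mem_insert]; omega
      rw [h2, Finset.prod_insert (by simp only [mem_Icc]; omega)]
      have hpN1 : p (N + 1) = 0 := hN (N + 1) (by omega)
      rw [hpN1]
      simp
    rw [hrest, ih q N hqmono hqN hqfrob a]
    -- row 1 equals the first ascending Pochhammer
    have hrow1 : (∏ j ∈ Icc 1 (p 1), (a + (j : ℂ) - ((1 : ℕ) : ℂ))) =
        (ascPochhammer ℂ (p 1)).eval a := by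
      rw [asc_prod, icc_range]
      apply prod_congr rfl
      intro j _
      push_cast
      ring
    -- column 1 equals the signed Pochhammer at 1 - a
    have hcol2 : (∏ i ∈ Icc 2 c, (a + 1 - (i : ℂ))) =
        (-1 : ℂ) ^ (c - 1) * (ascPochhammer ℂ (c - 1)).eval (1 - a) := by
      rw [asc_prod, show (2 : ℕ) = 1 + 1 from rfl,
        prod_shift 1 c (fun i => a + 1 - (i : ℂ)), icc_range]
      have hneg : (-1 : ℂ) ^ (c - 1) * ∏ i ∈ range (c - 1), (1 - a + (i : ℂ)) =
          ∏ i ∈ range (c - 1), (-1 : ℂ) * (1 - a + (i : ℂ)) := by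
        rw [prod_mul_distrib, prod_const, card_range]
      rw [hneg]
      apply prod_congr rfl
      intro i _
      push_cast
      ring
    rw [hrow1, hcol2]
    -- now transform the RHS
    have hsplitR : Finset.Icc 1 (k + 1) = insert 1 (Finset.Icc 2 (k + 1)) := by
      ext x; simp only [mem_Icc, Finset.mem_insert]; omega
    rw [hsplitR, Finset.prod_insert (by simp)]
    rw [show (2 : ℕ) = 1 + 1 from rfl,
      prod_shift 1 (k + 1) (fun i => (-1 : ℂ) ^ (conjP p i - i) *
        (ascPochhammer ℂ (p i - i + 1)).eval a *
        (ascPochhammer ℂ (conjP p i - i)).eval (1 - a))]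
    simp only [Nat.add_sub_cancel]
    have hshiftF : ∀ i ∈ Icc 1 k,
        ((-1 : ℂ) ^ (conjP p (i + 1) - (i + 1)) *
          (ascPochhammer ℂ (p (i + 1) - (i + 1) + 1)).eval a *
          (ascPochhammer ℂ (conjP p (i + 1) - (i + 1))).eval (1 - a)) =
        ((-1 : ℂ) ^ (conjP q i - i) *
          (ascPochhammer ℂ (q i - i + 1)).eval a *
          (ascPochhammer ℂ (conjP q i - i)).eval (1 - a)) := by
      intro i hi
      have hi' := mem_Icc.mp hi
      have h1 : i + 1 ≤ p (i + 1) := hple (i + 1) (by omega) (by omega)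
      have h2 : conjP q i = conjP p (i + 1) - 1 := hqconj i hi'.1 hi'.2
      have h3 : i + 1 ≤ conjP p (i + 1) := hcge (i + 1) (by omega) (by omega)
      have e1 : p (i + 1) - (i + 1) + 1 = q i - i + 1 := by simp only [hq]; omega
      have e2 : conjP p (i + 1) - (i + 1) = conjP q i - i := by omega
      rw [e1, e2]
    rw [prod_congr rfl hshiftF]
    rw [← hc, show p 1 - 1 + 1 = p 1 by omega]
    ring

open Finset Polynomial in
/-- For a partition `λ` (with at most `N` nonzero parts) with Frobenius coordinates
`(α₁,…,α_k | β₁,…,β_k)`, `α_i = λ_i - i`, `β_i = λ'_i - i`, and any `a ∈ ℂ`,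
the content product `(a)_λ = ∏_{(i,j)∈λ} (a + j - i)` satisfies
`(a)_λ = ∏_{i=1}^k (-1)^{β_i} (a)_{α_i+1} (1-a)_{β_i}`,
where `(a)_n = a(a+1)⋯(a+n-1)` is the Pochhammer symbol. -/
theorem content_product_frobenius (p : ℕ → ℕ) (N : ℕ)
    (hmono : ∀ i j, 1 ≤ i → i ≤ j → p j ≤ p i) (hN : ∀ i, N < i → p i = 0)
    (a : ℂ) :
    (∏ i ∈ Icc 1 N, ∏ j ∈ Icc 1 (p i), (a + (j : ℂ) - (i : ℂ))) =
      ∏ i ∈ Icc 1 (frobRank p),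
        ((-1 : ℂ) ^ (conjP p i - i) *
          (ascPochhammer ℂ (p i - i + 1)).eval a *
          (ascPochhammer ℂ (conjP p i - i)).eval (1 - a)) := by
  exact main_ind (frobRank p) p N hmono hN rfl a
end

section
/- For a partition λ with Frobenius coordinates (α₁,…,α_k | β₁,…,β_k) and complex numbers q, a with q ≠ 0, the q-content product (q^a;q)_λ := ∏_{(i,j)∈λ} (1 - q^{a+j-i}) satisfies (q^a;q)_λ = ∏_{i=1}^k (-1)^{β_i} q^{aβ_i - (β_i² + β_i)/2} (q^a;q)_{α_i+1} (q^{1-a};q)_{β_i}. -/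
open Finset

/-- A finset of positive naturals that is downward closed equals `Icc 1` of its card. -/
lemma downclosed_eq_Icc (S : Finset ℕ) (h0 : 0 ∉ S)
    (hdc : ∀ i ∈ S, ∀ k, 1 ≤ k → k ≤ i → k ∈ S) : S = Finset.Icc 1 S.card := by
  ext i
  simp only [Finset.mem_Icc]
  constructor
  · intro hi
    have h1 : 1 ≤ i := Nat.one_le_iff_ne_zero.2 (fun h => h0 (h ▸ hi))
    refine ⟨h1, ?_⟩
    have hsub : Finset.Icc 1 i ⊆ S := fun k hk =>
      hdc i hi k (Finset.mem_Icc.1 hk).1 (Finset.mem_Icc.1 hk).2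
    have := Finset.card_le_card hsub
    simpa [Nat.card_Icc] using this
  · rintro ⟨h1, h2⟩
    by_contra hi
    have hsub : S ⊆ Finset.Icc 1 (i - 1) := by
      intro k hk
      have hk1 : 1 ≤ k := Nat.one_le_iff_ne_zero.2 (fun h => h0 (h ▸ hk))
      have hki : k < i := by
        by_contra h
        exact hi (hdc k hk i h1 (le_of_not_gt h))
      exact Finset.mem_Icc.2 ⟨hk1, by omega⟩
    have := Finset.card_le_card hsub
    simp only [Nat.card_Icc] at this
    omega

section main
variable (p : ℕ → ℕ) (N : ℕ)
  (hmono : ∀ i j, 1 ≤ i → i ≤ j → p j ≤ p i) (hN : ∀ i, N < i → p i = 0)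

include hN in
lemma conj_card (j : ℕ) (hj : 1 ≤ j) :
    conjP p j = ((Icc 1 N).filter (fun i => j ≤ p i)).card := by
  have hset : {i : ℕ | 1 ≤ i ∧ j ≤ p i} = ↑((Icc 1 N).filter (fun i => j ≤ p i)) := by
    ext i
    simp only [Set.mem_setOf_eq, coe_filter, mem_Icc, Set.mem_setOf_eq]
    constructor
    · rintro ⟨h1, h2⟩
      refine ⟨⟨h1, ?_⟩, h2⟩
      by_contra h
      have := hN i (by omega)
      omega
    · rintro ⟨⟨h1, _⟩, h2⟩; exact ⟨h1, h2⟩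
  rw [conjP, hset, Nat.card_coe_set_eq, Set.ncard_coe_finset]

include hmono hN in
lemma conj_mem (j : ℕ) (hj : 1 ≤ j) (i : ℕ) :
    (i ∈ Icc 1 N ∧ j ≤ p i) ↔ (1 ≤ i ∧ i ≤ conjP p j) := by
  have hd := downclosed_eq_Icc ((Icc 1 N).filter (fun i => j ≤ p i))
    (by simp) ?_
  · rw [conj_card p N hN j hj]
    constructor
    · rintro ⟨h1, h2⟩
      have : i ∈ (Icc 1 N).filter (fun i => j ≤ p i) := by simp [mem_Icc.1 h1, h2]
      rw [hd] at this
      exact mem_Icc.1 this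
    · rintro ⟨h1, h2⟩
      have : i ∈ Finset.Icc 1 ((Icc 1 N).filter (fun i => j ≤ p i)).card := mem_Icc.2 ⟨h1, h2⟩
      rw [← hd] at this
      simp only [mem_filter, mem_Icc] at this
      exact ⟨mem_Icc.2 this.1, this.2⟩
  · intro a ha k hk1 hka
    simp only [mem_filter, mem_Icc] at ha ⊢
    exact ⟨⟨hk1, le_trans hka ha.1.2⟩, le_trans ha.2 (hmono k a hk1 hka)⟩

include hmono hN in
lemma rank_mem (i : ℕ) : (i ∈ Icc 1 N ∧ i ≤ p i) ↔ (1 ≤ i ∧ i ≤ frobRank p) := by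
  have hcard : frobRank p = ((Icc 1 N).filter (fun i => i ≤ p i)).card := by
    have hset : {i : ℕ | 1 ≤ i ∧ i ≤ p i} = ↑((Icc 1 N).filter (fun i => i ≤ p i)) := by
      ext i
      simp only [Set.mem_setOf_eq, coe_filter, mem_Icc, Set.mem_setOf_eq]
      constructor
      · rintro ⟨h1, h2⟩
        refine ⟨⟨h1, ?_⟩, h2⟩
        by_contra h
        have := hN i (by omega)
        omega
      · rintro ⟨⟨h1, _⟩, h2⟩; exact ⟨h1, h2⟩
    rw [frobRank, hset, Nat.card_coe_set_eq, Set.ncard_coe_finset]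
  have hd := downclosed_eq_Icc ((Icc 1 N).filter (fun i => i ≤ p i))
    (by simp) ?_
  · rw [hcard]
    constructor
    · rintro ⟨h1, h2⟩
      have : i ∈ (Icc 1 N).filter (fun i => i ≤ p i) := by simp [mem_Icc.1 h1, h2]
      rw [hd] at this
      exact mem_Icc.1 this
    · rintro ⟨h1, h2⟩
      have : i ∈ Finset.Icc 1 ((Icc 1 N).filter (fun i => i ≤ p i)).card := mem_Icc.2 ⟨h1, h2⟩
      rw [← hd] at this
      simp only [mem_filter, mem_Icc] at this
      exact ⟨mem_Icc.2 this.1, this.2⟩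
  · intro a ha k hk1 hka
    simp only [mem_filter, mem_Icc] at ha ⊢
    exact ⟨⟨hk1, le_trans hka ha.1.2⟩, le_trans (le_trans hka ha.2) (hmono k a hk1 hka)⟩

end main

lemma leg_prod (q Q : ℂ) (hq : q ≠ 0) (hQ : Q ≠ 0) (β : ℕ) :
    ∏ m ∈ range β, (1 - Q * q ^ (-((m : ℤ)+1))) =
      (-1 : ℂ)^β * Q^β * (q ^ ((β*(β+1))/2))⁻¹ * ∏ m ∈ range β, (1 - q * Q⁻¹ * q ^ m) := by
  have h2 : (∑ m ∈ range β, (m+1)) * 2 = β*(β+1) := by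
    induction β with
    | zero => simp
    | succ n ih => rw [Finset.sum_range_succ, add_mul, ih]; ring
  have key : ∀ m ∈ range β, (1 - Q * q ^ (-((m : ℤ)+1)))
      = ((-1 : ℂ)*Q) * (q^(m+1))⁻¹ * (1 - q * Q⁻¹ * q^m) := by
    intro m _
    have h1 : q ^ (-((m : ℤ)+1)) = (q^(m+1))⁻¹ := by
      rw [show (-((m : ℤ)+1)) = -((m+1 : ℕ) : ℤ) by push_cast; ring, zpow_neg, zpow_natCast]
    rw [h1]
    have hqm : (q : ℂ)^(m+1) ≠ 0 := pow_ne_zero _ hq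
    field_simp
    ring
  rw [Finset.prod_congr rfl key, Finset.prod_mul_distrib, Finset.prod_mul_distrib,
    Finset.prod_const, card_range, Finset.prod_inv_distrib, Finset.prod_pow_eq_pow_sum]
  have h3 : (β*(β+1))/2 = ∑ m ∈ range β, (m+1) := by omega
  rw [h3, mul_pow]

open Finset in
/-- q-content product in Frobenius coordinates.  Here `Q` stands for `q^a`
(so `q^{a+j-i} = Q·q^{j-i}` and `q^{1-a} = q·Q⁻¹`), `α_i = λ_i - i`,
`β_i = λ'_i - i`, and `(b;q)_n = ∏_{l=0}^{n-1}(1 - b q^l)`.  The claim: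
`(q^a;q)_λ := ∏_{(i,j)∈λ} (1 - q^{a+j-i})
  = ∏_{i=1}^k (-1)^{β_i} q^{aβ_i - (β_i²+β_i)/2} (q^a;q)_{α_i+1} (q^{1-a};q)_{β_i}`,
with `q^{aβ_i - (β_i²+β_i)/2} = Q^{β_i} · (q^{β_i(β_i+1)/2})⁻¹`. -/
theorem q_content_product_frobenius (p : ℕ → ℕ) (N : ℕ)
    (hmono : ∀ i j, 1 ≤ i → i ≤ j → p j ≤ p i) (hN : ∀ i, N < i → p i = 0)
    (q Q : ℂ) (hq : q ≠ 0) (hQ : Q ≠ 0) :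
    (∏ i ∈ Icc 1 N, ∏ j ∈ Icc 1 (p i), (1 - Q * q ^ ((j : ℤ) - (i : ℤ)))) =
      ∏ i ∈ Icc 1 (frobRank p),
        ((-1 : ℂ) ^ (conjP p i - i) *
          Q ^ (conjP p i - i) * (q ^ (((conjP p i - i) * (conjP p i - i + 1)) / 2))⁻¹ *
          (∏ l ∈ range (p i - i + 1), (1 - Q * q ^ l)) *
          (∏ l ∈ range (conjP p i - i), (1 - q * Q⁻¹ * q ^ l))) := by
  classical
  have hrank := rank_mem p N hmono hN
  have hconj := conj_mem p N hmono hN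
  set r := frobRank p with hr
  -- split each row at the diagonal
  have hsplit : ∀ i ∈ Icc 1 N, (∏ j ∈ Icc 1 (p i), (1 - Q * q ^ ((j : ℤ) - (i : ℤ))))
      = (∏ j ∈ Icc i (p i), (1 - Q * q ^ ((j : ℤ) - (i : ℤ)))) *
        (∏ j ∈ (Icc 1 (p i)).filter (fun j => j < i), (1 - Q * q ^ ((j : ℤ) - (i : ℤ)))) := by
    intro i hi
    rw [mem_Icc] at hi
    rw [← Finset.prod_filter_mul_prod_filter_not (Icc 1 (p i)) (fun j => i ≤ j)]
    congr 2
    · ext j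
      simp only [mem_filter, mem_Icc]
      omega
    · ext j
      simp only [mem_filter, mem_Icc, not_le]
  rw [Finset.prod_congr rfl hsplit, Finset.prod_mul_distrib]
  -- the arm part
  have hA : (∏ i ∈ Icc 1 N, ∏ j ∈ Icc i (p i), (1 - Q * q ^ ((j : ℤ) - (i : ℤ))))
      = ∏ i ∈ Icc 1 r, ∏ l ∈ range (p i - i + 1), (1 - Q * q ^ l) := by
    have hsub : Icc 1 r ⊆ Icc 1 N := by
      intro i hi
      rw [mem_Icc] at hi
      exact ((hrank i).2 ⟨hi.1, hi.2⟩).1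
    have hvan : ∀ i ∈ Icc 1 N, i ∉ Icc 1 r →
        (∏ j ∈ Icc i (p i), (1 - Q * q ^ ((j : ℤ) - (i : ℤ)))) = 1 := by
      intro i hi hir
      have h1 : 1 ≤ i := (mem_Icc.1 hi).1
      have : p i < i := by
        by_contra h
        exact hir (mem_Icc.2 ((hrank i).1 ⟨hi, le_of_not_gt h⟩))
      rw [Finset.Icc_eq_empty (by omega), prod_empty]
    rw [← Finset.prod_subset hsub hvan]
    apply Finset.prod_congr rfl
    intro i hi
    rw [mem_Icc] at hi
    have hip : i ≤ p i := ((hrank i).2 ⟨hi.1, hi.2⟩).2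
    rw [← Finset.Ico_add_one_right_eq_Icc, Finset.prod_Ico_eq_prod_range,
      show p i + 1 - i = p i - i + 1 by omega]
    apply Finset.prod_congr rfl
    intro l _
    congr 1
    rw [show ((i + l : ℕ) : ℤ) - (i : ℤ) = ((l : ℕ) : ℤ) by push_cast; ring, zpow_natCast]
  -- the leg part
  have hB : (∏ i ∈ Icc 1 N, ∏ j ∈ (Icc 1 (p i)).filter (fun j => j < i),
        (1 - Q * q ^ ((j : ℤ) - (i : ℤ))))
      = ∏ j ∈ Icc 1 r, ∏ m ∈ range (conjP p j - j), (1 - Q * q ^ (-((m : ℤ) + 1))) := by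
    have hmem : ∀ x y, (x ∈ Icc 1 N ∧ y ∈ (Icc 1 (p x)).filter (fun j => j < x)) ↔
        (x ∈ Icc (y+1) (conjP p y) ∧ y ∈ Icc 1 r) := by
      intro x y
      simp only [mem_filter, mem_Icc]
      constructor
      · rintro ⟨⟨hx1, hxN⟩, ⟨⟨hy1, hyp⟩, hyx⟩⟩
        have hyr : 1 ≤ y ∧ y ≤ r := by
          refine (hrank y).1 ⟨mem_Icc.2 ⟨hy1, by omega⟩, ?_⟩
          exact le_trans hyp (hmono y x hy1 (by omega))
        have hxc : 1 ≤ x ∧ x ≤ conjP p y :=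
          (hconj y hy1 x).1 ⟨mem_Icc.2 ⟨hx1, hxN⟩, hyp⟩
        exact ⟨⟨by omega, hxc.2⟩, hyr⟩
      · rintro ⟨⟨hyx, hxc⟩, ⟨hy1, hyr⟩⟩
        have := (hconj y hy1 x).2 ⟨by omega, hxc⟩
        rw [mem_Icc] at this
        exact ⟨this.1, ⟨⟨hy1, this.2⟩, by omega⟩⟩
    rw [Finset.prod_comm' hmem]
    apply Finset.prod_congr rfl
    intro j hj
    rw [← Finset.Ico_add_one_right_eq_Icc, Finset.prod_Ico_eq_prod_range,
      show conjP p j + 1 - (j + 1) = conjP p j - j by omega]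
    apply Finset.prod_congr rfl
    intro m _
    congr 1
    push_cast
    ring
  rw [hA, hB, ← Finset.prod_mul_distrib]
  apply Finset.prod_congr rfl
  intro i hi
  rw [leg_prod q Q hq hQ]
  ring
end

section
/- For any partition λ and parameters a, q, the ratio s_λ(t(a,q)) / s_λ(t(∞,q)) equals the q-content product (q^a;q)_λ = ∏_{(i,j)∈λ} (1 - q^{a+j-i}). -/
/-- The Schur function `s_λ(t) = det(h_{λ_i-i+j}(t))_{1≤i,j≤L}` evaluated through the
values `h k` of the complete symmetric functions at the given times (`h_k = 0` for
`k < 0`); `L` is (an upper bound for) the number of parts of `λ`. -/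
noncomputable def schurDet (h : ℕ → ℂ) (p : ℕ → ℕ) (L : ℕ) : ℂ :=
  Matrix.det (Matrix.of fun i j : Fin L =>
    if ((p (i.1 + 1) : ℤ) + j.1 - i.1) < 0 then 0
    else h ((p (i.1 + 1) : ℤ) + j.1 - i.1).toNat)

/-- The q-Pochhammer product `(b;q)_n = (1-b)(1-bq)⋯(1-bq^{n-1})`. -/
noncomputable def qPoch (b q : ℂ) (n : ℕ) : ℂ := ∏ l ∈ Finset.range n, (1 - b * q ^ l)

/-!
Write `m_i = λ_i + L - i` and `x_i = q^{m_i}`. With the columns reversed, the Jacobi–Trudi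
matrix has entries `h_{m_i - s}`. Multiplying row `i` of the `t(a,q)` matrix by
`(q;q)_{m_i} ∏_{t=1}^{L-1} (1 - Q q^{m_i - t})` turns its entries into `(Q;q)_{m_i}` times
`∏_{t<s} (1 - q^{-t} x_i) ∏_{s≤t<L-1} (1 - Q q^{-t-1} x_i)`, and Krattenthaler's determinant
lemma evaluates the resulting determinant as `∏_r (1 - Q q^{-r-1})^{L-1-r}` times a constant
times the Vandermonde determinant of the `x_i`. At `Q = 0` the same computation gives the
`t(∞,q)` determinant; regrouping the factors `1 - Q q^c` row by row gives the content product,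
up to the row factors, which are nonzero polynomials in `Q` and cancel in `ℂ[Q]`. The
denominator is nonzero because the `x_i` are distinct.
-/

open Finset Polynomial

section Krattenthaler

variable {F : Type*} [Field F] {n : ℕ} (α β : ℕ → F) (x : Fin n → F)

def krattenthalerMatrix (r : ℕ) : Matrix (Fin n) (Fin n) F :=
  Matrix.of fun i (s : Fin n) =>
    (∏ t ∈ range s, (1 - α t * x i)) * ∏ t ∈ Ico (s + r) (n - 1), (1 - β t * x i)

variable {α} in
lemma det_krattenthalerMatrix_of_le (hα : ∀ t, α t ≠ 0) {r : ℕ} (hr : n - 1 ≤ r) :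
    (krattenthalerMatrix α β x r).det =
      (∏ s : Fin n, ∏ t ∈ range s, -α t) * (Matrix.vandermonde x).det := by
  set P : Fin n → F[X] := fun s => ∏ t ∈ range s, (X - C (α t)⁻¹)
  set E : Matrix (Fin n) (Fin n) F := Matrix.of fun i s => (P s).eval (x i)
  have hcol : krattenthalerMatrix α β x r =
      Matrix.of fun i (s : Fin n) => (∏ t ∈ range s, -α t) * E i s := by
    ext i s
    have hempty : Ico ((s : ℕ) + r) (n - 1) = ∅ := Ico_eq_empty (by omega)
    simp only [krattenthalerMatrix, P, E, Matrix.of_apply, hempty, prod_empty, mul_one,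
      eval_prod, eval_sub, eval_X, eval_C, ← prod_mul_distrib]
    refine prod_congr rfl fun t _ => ?_
    field_simp [hα t]
    ring
  have hmonic : ∀ s, (P s).Monic := fun s => monic_prod_of_monic _ _ fun t _ => monic_X_sub_C _
  rw [hcol, Matrix.det_mul_row,
    ← Matrix.det_eval_matrixOfPolynomials_eq_det_vandermonde _ _ _ hmonic]
  intro s
  simp [P, natDegree_prod_of_monic, monic_X_sub_C]

variable {α} in
/-- Subtracting `β_{s+r} / α_s` times column `s + 1` from column `s`, for all `s` at once,
strips the factor `1 - β_{s+r} X` from column `s`. -/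
lemma det_krattenthalerMatrix_eq_mul_det_succ (hα : ∀ t, α t ≠ 0) (r : ℕ) :
    (krattenthalerMatrix α β x r).det =
      (∏ s ∈ range (n - 1 - r), (1 - β (s + r) / α s)) *
        (krattenthalerMatrix α β x (r + 1)).det := by
  set N : Matrix (Fin n) (Fin n) F := Matrix.of fun k s =>
    if (k : ℕ) = s + 1 ∧ (s : ℕ) + r < n - 1 then β (s + r) / α s else 0
  have hT : (1 - N).det = 1 := by
    rw [Matrix.det_of_isLowerTriangular _ fun k s hks => ?_]
    · simp [N]
    · have hks : (k : ℕ) < s := hks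
      rw [Matrix.sub_apply, Matrix.one_apply_ne (Fin.ne_of_lt hks)]
      simp [N]
      omega
  have hcol : krattenthalerMatrix α β x r * (1 - N) = Matrix.of fun i (s : Fin n) =>
      (if (s : ℕ) + r < n - 1 then 1 - β (s + r) / α s else 1) *
        krattenthalerMatrix α β x (r + 1) i s := by
    ext i s
    rw [Matrix.mul_sub, Matrix.mul_one, Matrix.sub_apply, Matrix.mul_apply, Matrix.of_apply]
    split_ifs with hs
    · rw [sum_eq_single ⟨s + 1, by omega⟩ fun k _ hk => by simp [N, Fin.ext_iff] at hk ⊢; omega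
        (by simp)]
      simp only [krattenthalerMatrix, N, Matrix.of_apply, true_and, if_pos hs, prod_range_succ,
        prod_eq_prod_Ico_succ_bot hs, show (s : ℕ) + 1 + r = s + r + 1 by omega,
        show (s : ℕ) + (r + 1) = s + r + 1 by omega]
      generalize ∏ t ∈ range s, (1 - α t * x i) = A
      generalize ∏ t ∈ Ico (s + r + 1) (n - 1), (1 - β t * x i) = B
      field_simp [hα s]
      ring
    · rw [sum_eq_zero fun k _ => by simp [N, hs]]
      simp [krattenthalerMatrix, Ico_eq_empty_of_le (show n - 1 ≤ (s : ℕ) + r by omega),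
        Ico_eq_empty_of_le (show n - 1 ≤ (s : ℕ) + (r + 1) by omega)]
  have hfilter : (range n).filter (fun s => s + r < n - 1) = range (n - 1 - r) := by
    ext s
    simp only [mem_filter, mem_range]
    omega
  calc (krattenthalerMatrix α β x r).det = (krattenthalerMatrix α β x r * (1 - N)).det := by
        rw [Matrix.det_mul, hT, mul_one]
    _ = _ := by
        rw [hcol, Matrix.det_mul_row, Fin.prod_univ_eq_prod_range
          (fun s => if s + r < n - 1 then 1 - β (s + r) / α s else 1), ← prod_filter,
          hfilter]

variable {α} in
theorem det_krattenthalerMatrix_zero (hα : ∀ t, α t ≠ 0) :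
    (krattenthalerMatrix α β x 0).det =
      (∏ r ∈ range n, ∏ s ∈ range (n - 1 - r), (1 - β (s + r) / α s)) *
        ((∏ s : Fin n, ∏ t ∈ range s, -α t) * (Matrix.vandermonde x).det) := by
  have hpeel : ∀ N, (krattenthalerMatrix α β x 0).det =
      (∏ r ∈ range N, ∏ s ∈ range (n - 1 - r), (1 - β (s + r) / α s)) *
        (krattenthalerMatrix α β x N).det := by
    intro N
    induction N with
    | zero => simp
    | succ N ih =>
      rw [ih, det_krattenthalerMatrix_eq_mul_det_succ β x hα, prod_range_succ, mul_assoc]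
  rw [hpeel n, det_krattenthalerMatrix_of_le β x hα (Nat.sub_le n 1)]

end Krattenthaler

lemma prod_range_prod_range_eq_prod_pow {M : Type*} [CommMonoid M] (g : ℕ → M) (n : ℕ) :
    ∏ i ∈ range n, ∏ r ∈ range i, g r = ∏ r ∈ range n, g r ^ (n - 1 - r) := by
  induction n with
  | zero => simp
  | succ n ih =>
    rw [prod_range_succ, ih, prod_range_succ _ n, Nat.add_sub_cancel, Nat.sub_self, pow_zero,
      mul_one, ← prod_mul_distrib]
    refine prod_congr rfl fun r hr => ?_
    rw [← pow_succ, show n - 1 - r + 1 = n - r by rw [mem_range] at hr; omega]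

lemma prod_Icc_one_eq_prod_range {M : Type*} [CommMonoid M] (f : ℕ → M) (n : ℕ) :
    ∏ i ∈ Icc 1 n, f i = ∏ i ∈ range n, f (i + 1) := by
  rw [range_eq_Ico, prod_Ico_add', zero_add, Ico_add_one_right_eq_Icc]

lemma Polynomial.eq_of_forall_eval_mul_eq {R : Type*} [CommRing R] [IsDomain R] [Infinite R]
    {r f g : R[X]} (hr : r ≠ 0) (h : ∀ z, r.eval z * f.eval z = r.eval z * g.eval z) : f = g :=
  mul_left_cancel₀ hr (Polynomial.funext fun z => by simp only [eval_mul, h])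

lemma zpow_neg_mul_pow {G₀ : Type*} [GroupWithZero G₀] {q : G₀} (hq : q ≠ 0) {t m : ℕ}
    (h : t ≤ m) :
    q ^ (-(t : ℤ)) * q ^ m = q ^ (m - t) := by
  rw [← zpow_natCast, ← zpow_natCast, ← zpow_add₀ hq]
  congr 1
  omega

lemma pow_injective_of_pow_ne_one {M₀ : Type*} [MonoidWithZero M₀] [IsCancelMulZero M₀]
    {q : M₀} (hq : q ≠ 0) (hqm : ∀ m : ℕ, 1 ≤ m → q ^ m ≠ 1) :
    Function.Injective fun k : ℕ => q ^ k := by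
  intro a b hab
  wlog h : a ≤ b generalizing a b
  · exact (this hab.symm (le_of_not_ge h)).symm
  obtain ⟨d, rfl⟩ := Nat.exists_eq_add_of_le h
  rcases d with _ | d
  · rfl
  · have h : q ^ a * q ^ (d + 1) = q ^ a * 1 := by rw [mul_one, ← pow_add]; exact hab.symm
    exact absurd (mul_left_cancel₀ (pow_ne_zero a hq) h) (hqm (d + 1) d.succ_pos)

def shiftedJacobiTrudi {R : Type*} [Zero R] {n : ℕ} (h : ℕ → R) (m : Fin n → ℕ) :
    Matrix (Fin n) (Fin n) R :=
  Matrix.of fun i s => if (s : ℕ) ≤ m i then h (m i - s) else 0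

lemma shiftedJacobiTrudi_map {R S : Type*} [Semiring R] [Semiring S] {n : ℕ} (f : R →+* S)
    (h : ℕ → R) (m : Fin n → ℕ) :
    (shiftedJacobiTrudi h m).map f = shiftedJacobiTrudi (f ∘ h) m := by
  ext i s
  simp only [shiftedJacobiTrudi, Matrix.map_apply, Matrix.of_apply]
  split_ifs <;> simp

/-- Row `i : Fin L` is row `i + 1` of `λ`, so this is `λ_i + L - i` in the paper's indexing. -/
def shiftedParts (p : ℕ → ℕ) (L : ℕ) (i : Fin L) : ℕ := p (i + 1) + (L - 1 - i)

lemma shiftedParts_strictAnti {p : ℕ → ℕ} (hmono : ∀ i j, 1 ≤ i → i ≤ j → p j ≤ p i) (n : ℕ) :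
    StrictAnti (shiftedParts p n) := fun i j hij => by
  have hij : (i : ℕ) < j := hij
  have := hmono (i + 1) (j + 1) (by omega) (by omega)
  simp only [shiftedParts]
  omega

lemma schurDet_eq_sign_mul_det_shiftedJacobiTrudi (h : ℕ → ℂ) (p : ℕ → ℕ) (L : ℕ) :
    schurDet h p L =
      (Equiv.Perm.sign (Fin.revPerm : Equiv.Perm (Fin L)) : ℂ) *
        (shiftedJacobiTrudi h (shiftedParts p L)).det := by
  rw [schurDet, ← Matrix.det_permute']
  congr 1
  ext i j
  have hj : (Fin.revPerm j : ℕ) = L - 1 - j := by simp [Fin.val_rev]; omega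
  simp only [shiftedJacobiTrudi, shiftedParts, Matrix.submatrix_apply, Matrix.of_apply, id, hj]
  split_ifs <;> first | rfl | omega | (congr 1; omega)

/-- `h_k(t(a,q))` with `Q = q^a`; at `Q = 0` it is `h_k(t(∞,q))`. -/
noncomputable def hSpec (Q q : ℂ) (k : ℕ) : ℂ := qPoch Q q k / qPoch q q k

noncomputable def qContentProd (Q q : ℂ) (p : ℕ → ℕ) (L : ℕ) : ℂ :=
  ∏ i ∈ Icc 1 L, ∏ j ∈ Icc 1 (p i), (1 - Q * q ^ ((j : ℤ) - (i : ℤ)))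

lemma qPoch_zero_left (q : ℂ) (k : ℕ) : qPoch 0 q k = 1 := by simp [qPoch]

lemma hSpec_zero_left (q : ℂ) : hSpec 0 q = fun k => (qPoch q q k)⁻¹ := by
  funext k
  simp [hSpec, qPoch_zero_left]

section qSpecialization

variable {q : ℂ}

lemma qPoch_self_ne_zero (hqm : ∀ m : ℕ, 1 ≤ m → q ^ m ≠ 1) (k : ℕ) : qPoch q q k ≠ 0 :=
  prod_ne_zero_iff.2 fun l _ =>
    sub_ne_zero.2 fun h => hqm (l + 1) l.succ_pos (by rw [pow_succ']; exact h.symm)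

lemma qPoch_eq_mul_prod (b q : ℂ) {s m : ℕ} (h : s ≤ m) :
    qPoch b q m = qPoch b q (m - s) * ∏ t ∈ range s, (1 - b * q ^ (m - 1 - t)) := by
  conv_lhs => rw [← Nat.sub_add_cancel h]
  rw [qPoch, prod_range_add, ← prod_range_reflect (fun k => 1 - b * q ^ (m - s + k)) s]
  congr 1
  refine prod_congr rfl fun t ht => ?_
  rw [mem_range] at ht
  congr 3
  omega

lemma qPoch_mul_hSpec_eq (hq : q ≠ 0) (hqm : ∀ m : ℕ, 1 ≤ m → q ^ m ≠ 1) (Q : ℂ)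
    {m s n : ℕ} (hs : s ≤ n - 1) :
    qPoch q q m * (∏ t ∈ range (n - 1), (1 - Q * q ^ (-((t + 1 : ℕ) : ℤ)) * q ^ m)) *
        (if s ≤ m then hSpec Q q (m - s) else 0) =
      qPoch Q q m * ((∏ t ∈ range s, (1 - q ^ (-(t : ℤ)) * q ^ m)) *
        ∏ t ∈ Ico s (n - 1), (1 - Q * q ^ (-((t + 1 : ℕ) : ℤ)) * q ^ m)) := by
  split_ifs with hsm
  · have hα : ∏ t ∈ range s, (1 - q ^ (-(t : ℤ)) * q ^ m) =
        ∏ t ∈ range s, (1 - q * q ^ (m - 1 - t)) := prod_congr rfl fun t ht => by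
      rw [mem_range] at ht
      rw [zpow_neg_mul_pow hq (by omega), ← pow_succ', show m - 1 - t + 1 = m - t by omega]
    have hβ : ∏ t ∈ range s, (1 - Q * q ^ (-((t + 1 : ℕ) : ℤ)) * q ^ m) =
        ∏ t ∈ range s, (1 - Q * q ^ (m - 1 - t)) := prod_congr rfl fun t ht => by
      rw [mem_range] at ht
      rw [mul_assoc, zpow_neg_mul_pow hq (by omega), show m - (t + 1) = m - 1 - t by omega]
    rw [← prod_range_mul_prod_Ico _ hs, hβ, hα, qPoch_eq_mul_prod q q hsm,
      qPoch_eq_mul_prod Q q hsm, hSpec, mul_div_assoc', div_eq_iff (qPoch_self_ne_zero hqm _)]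
    ring
  · rw [mul_zero, prod_eq_zero (mem_range.2 (not_le.1 hsm))
      (by rw [zpow_neg_mul_pow hq le_rfl, Nat.sub_self, pow_zero, sub_self]), zero_mul, mul_zero]

theorem det_shiftedJacobiTrudi_hSpec (hq : q ≠ 0) (hqm : ∀ m : ℕ, 1 ≤ m → q ^ m ≠ 1) (Q : ℂ)
    {n : ℕ} (m : Fin n → ℕ) :
    (∏ i, qPoch q q (m i) * ∏ t ∈ range (n - 1), (1 - Q * q ^ (-((t + 1 : ℕ) : ℤ)) * q ^ m i)) *
        (shiftedJacobiTrudi (hSpec Q q) m).det =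
      (∏ i, qPoch Q q (m i)) *
        ((∏ r ∈ range n, (1 - Q * q ^ (-((r + 1 : ℕ) : ℤ))) ^ (n - 1 - r)) *
          ((∏ s : Fin n, ∏ t ∈ range s, -q ^ (-(t : ℤ))) *
            (Matrix.vandermonde fun i => q ^ m i).det)) := by
  have hrows : (Matrix.of fun i s => (qPoch q q (m i) *
        ∏ t ∈ range (n - 1), (1 - Q * q ^ (-((t + 1 : ℕ) : ℤ)) * q ^ m i)) *
          shiftedJacobiTrudi (hSpec Q q) m i s) =
      Matrix.of fun i s => qPoch Q q (m i) *
        krattenthalerMatrix (fun t => q ^ (-(t : ℤ))) (fun t => Q * q ^ (-((t + 1 : ℕ) : ℤ)))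
          (fun i => q ^ m i) 0 i s := by
    ext i s
    exact qPoch_mul_hSpec_eq hq hqm Q (by omega)
  rw [← Matrix.det_mul_column, hrows, Matrix.det_mul_column,
    det_krattenthalerMatrix_zero _ _ fun t => zpow_ne_zero _ hq]
  congr 2
  refine prod_congr rfl fun r _ => ?_
  rw [prod_congr rfl fun s _ => ?_, prod_const, card_range]
  rw [mul_div_assoc, ← zpow_sub₀ hq]
  congr 3
  push_cast
  ring

lemma qPoch_mul_prod_eq_prod_mul_row (hq : q ≠ 0) (Q : ℂ) (p : ℕ → ℕ) {n i : ℕ} (hi : i < n) :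
    qPoch Q q (p (i + 1) + (n - 1 - i)) * ∏ r ∈ range i, (1 - Q * q ^ (-((r + 1 : ℕ) : ℤ))) =
      (∏ t ∈ range (n - 1),
          (1 - Q * q ^ (-((t + 1 : ℕ) : ℤ)) * q ^ (p (i + 1) + (n - 1 - i)))) *
        ∏ j ∈ Icc 1 (p (i + 1)), (1 - Q * q ^ ((j : ℤ) - ((i + 1 : ℕ) : ℤ))) := by
  set P := p (i + 1)
  -- Both sides are `∏ (1 - Q q^c)` over `-i ≤ c < P + n - 1 - i`, split at `0` on the left
  -- and at `P - i` on the right; `f k` is the factor for `c = k - i`.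
  set f : ℕ → ℂ := fun k => 1 - Q * q ^ ((k : ℤ) - i)
  have hqPoch : qPoch Q q (P + (n - 1 - i)) = ∏ l ∈ range (P + (n - 1 - i)), f (i + l) :=
    prod_congr rfl fun l _ => by
      simp only [f]
      rw [← zpow_natCast]
      congr 3
      push_cast
      ring
  have hneg : ∏ r ∈ range i, (1 - Q * q ^ (-((r + 1 : ℕ) : ℤ))) = ∏ k ∈ range i, f k := by
    rw [← prod_range_reflect f i]
    refine prod_congr rfl fun r hr => ?_
    rw [mem_range] at hr
    simp only [f]
    congr 3
    push_cast
    omega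
  have hR : ∏ t ∈ range (n - 1), (1 - Q * q ^ (-((t + 1 : ℕ) : ℤ)) * q ^ (P + (n - 1 - i))) =
      ∏ k ∈ range (n - 1), f (P + k) := by
    rw [← prod_range_reflect (fun k => f (P + k)) (n - 1)]
    refine prod_congr rfl fun t ht => ?_
    rw [mem_range] at ht
    simp only [f]
    rw [mul_assoc, ← zpow_natCast q (P + _), ← zpow_add₀ hq]
    congr 3
    push_cast
    omega
  have hrow : ∏ j ∈ Icc 1 P, (1 - Q * q ^ ((j : ℤ) - ((i + 1 : ℕ) : ℤ))) =
      ∏ k ∈ range P, f k := by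
    rw [prod_Icc_one_eq_prod_range]
    refine prod_congr rfl fun j _ => ?_
    simp only [f]
    congr 3
    push_cast
    ring
  rw [hqPoch, hneg, hR, hrow, mul_comm, ← prod_range_add, mul_comm, ← prod_range_add,
    show i + (P + (n - 1 - i)) = P + (n - 1) by omega]

lemma prod_qPoch_shiftedParts_mul (hq : q ≠ 0) (Q : ℂ) (p : ℕ → ℕ) (n : ℕ) :
    (∏ i, qPoch Q q (shiftedParts p n i)) *
        ∏ r ∈ range n, (1 - Q * q ^ (-((r + 1 : ℕ) : ℤ))) ^ (n - 1 - r) =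
      (∏ i, ∏ t ∈ range (n - 1), (1 - Q * q ^ (-((t + 1 : ℕ) : ℤ)) * q ^ shiftedParts p n i)) *
        qContentProd Q q p n := by
  simp only [shiftedParts]
  rw [← prod_range_prod_range_eq_prod_pow, qContentProd, prod_Icc_one_eq_prod_range,
    Fin.prod_univ_eq_prod_range (fun i => qPoch Q q (p (i + 1) + (n - 1 - i))),
    Fin.prod_univ_eq_prod_range (fun i => ∏ t ∈ range (n - 1),
      (1 - Q * q ^ (-((t + 1 : ℕ) : ℤ)) * q ^ (p (i + 1) + (n - 1 - i)))),
    ← prod_mul_distrib, ← prod_mul_distrib]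
  exact prod_congr rfl fun i hi => qPoch_mul_prod_eq_prod_mul_row hq Q p (mem_range.1 hi)

theorem prod_mul_det_shiftedJacobiTrudi_hSpec (hq : q ≠ 0) (hqm : ∀ m : ℕ, 1 ≤ m → q ^ m ≠ 1)
    (Q : ℂ) (p : ℕ → ℕ) (n : ℕ) :
    (∏ i, ∏ t ∈ range (n - 1), (1 - Q * q ^ (-((t + 1 : ℕ) : ℤ)) * q ^ shiftedParts p n i)) *
        (shiftedJacobiTrudi (hSpec Q q) (shiftedParts p n)).det =
      (∏ i, ∏ t ∈ range (n - 1), (1 - Q * q ^ (-((t + 1 : ℕ) : ℤ)) * q ^ shiftedParts p n i)) *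
        ((shiftedJacobiTrudi (hSpec 0 q) (shiftedParts p n)).det * qContentProd Q q p n) := by
  have hQ := det_shiftedJacobiTrudi_hSpec hq hqm Q (shiftedParts p n)
  have h0 := det_shiftedJacobiTrudi_hSpec hq hqm 0 (shiftedParts p n)
  simp only [zero_mul, sub_zero, prod_const_one, mul_one, one_pow, qPoch_zero_left,
    one_mul] at h0
  rw [← mul_assoc (∏ i, qPoch Q q _), prod_qPoch_shiftedParts_mul hq, ← h0,
    prod_mul_distrib] at hQ
  apply mul_left_cancel₀ (prod_ne_zero_iff.2 fun i _ => qPoch_self_ne_zero hqm _)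
  linear_combination hQ

theorem det_shiftedJacobiTrudi_hSpec_eq_mul (hq : q ≠ 0) (hqm : ∀ m : ℕ, 1 ≤ m → q ^ m ≠ 1)
    (Q : ℂ) (p : ℕ → ℕ) (n : ℕ) :
    (shiftedJacobiTrudi (hSpec Q q) (shiftedParts p n)).det =
      (shiftedJacobiTrudi (hSpec 0 q) (shiftedParts p n)).det * qContentProd Q q p n := by
  set m := shiftedParts p n
  let hPoly : ℕ → ℂ[X] := fun k => C (qPoch q q k)⁻¹ * ∏ l ∈ range k, (1 - X * C (q ^ l))
  let R : ℂ[X] := ∏ i, ∏ t ∈ range (n - 1), (1 - X * C (q ^ (-((t + 1 : ℕ) : ℤ)) * q ^ m i))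
  let K : ℂ[X] := ∏ i ∈ Icc 1 n, ∏ j ∈ Icc 1 (p i), (1 - X * C (q ^ ((j : ℤ) - (i : ℤ))))
  have hD : ∀ z, (shiftedJacobiTrudi hPoly m).det.eval z =
      (shiftedJacobiTrudi (hSpec z q) m).det := fun z => by
    rw [← coe_evalRingHom, RingHom.map_det, RingHom.mapMatrix_apply, shiftedJacobiTrudi_map]
    congr
    funext k
    simp [hPoly, hSpec, qPoch, eval_prod, div_eq_inv_mul]
  have hR : ∀ z, R.eval z =
      ∏ i, ∏ t ∈ range (n - 1), (1 - z * q ^ (-((t + 1 : ℕ) : ℤ)) * q ^ m i) := fun z => by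
    simp [R, eval_prod, mul_assoc]
  have hK : ∀ z, K.eval z = qContentProd z q p n := fun z => by
    simp only [K, qContentProd, eval_prod, eval_sub, eval_one, eval_mul, eval_X, eval_C]
  have hR0 : R ≠ 0 := fun h => by simpa [hR] using congrArg (eval 0) h
  have hdet := Polynomial.eq_of_forall_eval_mul_eq (f := (shiftedJacobiTrudi hPoly m).det)
    (g := C (shiftedJacobiTrudi (hSpec 0 q) m).det * K) hR0 fun z => by
      rw [hD, hR, eval_mul, eval_C, hK]
      exact prod_mul_det_shiftedJacobiTrudi_hSpec hq hqm z p n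
  simpa [hD, hK] using congrArg (eval Q) hdet

theorem det_shiftedJacobiTrudi_hSpec_zero_ne_zero (hq : q ≠ 0) (hqm : ∀ m : ℕ, 1 ≤ m → q ^ m ≠ 1)
    {p : ℕ → ℕ} (hmono : ∀ i j, 1 ≤ i → i ≤ j → p j ≤ p i) (n : ℕ) :
    (shiftedJacobiTrudi (hSpec 0 q) (shiftedParts p n)).det ≠ 0 := by
  have h0 := det_shiftedJacobiTrudi_hSpec hq hqm 0 (shiftedParts p n)
  simp only [zero_mul, sub_zero, prod_const_one, mul_one, one_pow, qPoch_zero_left,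
    one_mul] at h0
  refine right_ne_zero_of_mul (a := ∏ i, qPoch q q (shiftedParts p n i)) ?_
  rw [h0]
  refine mul_ne_zero ?_ ?_
  · exact prod_ne_zero_iff.2 fun s _ => prod_ne_zero_iff.2 fun t _ =>
      neg_ne_zero.2 (zpow_ne_zero _ hq)
  · exact Matrix.det_vandermonde_ne_zero_iff.2
      ((pow_injective_of_pow_ne_one hq hqm).comp (shiftedParts_strictAnti hmono n).injective)

end qSpecialization

open Finset in
theorem schur_ratio_q_content_product_general (p : ℕ → ℕ) (L : ℕ)
    (hmono : ∀ i j, 1 ≤ i → i ≤ j → p j ≤ p i)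
    (q Q : ℂ) (hq : q ≠ 0) (hqm : ∀ m : ℕ, 1 ≤ m → q ^ m ≠ 1) :
    schurDet (fun k => qPoch Q q k / qPoch q q k) p L /
      schurDet (fun k => (qPoch q q k)⁻¹) p L =
      ∏ i ∈ Icc 1 L, ∏ j ∈ Icc 1 (p i), (1 - Q * q ^ ((j : ℤ) - (i : ℤ))) := by
  have hsign : (Equiv.Perm.sign (Fin.revPerm : Equiv.Perm (Fin L)) : ℂ) ≠ 0 := by
    rcases Int.units_eq_one_or (Equiv.Perm.sign (Fin.revPerm : Equiv.Perm (Fin L))) with h | h <;>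
      simp [h]
  rw [← hSpec_zero_left, show (fun k => qPoch Q q k / qPoch q q k) = hSpec Q q from rfl,
    schurDet_eq_sign_mul_det_shiftedJacobiTrudi, schurDet_eq_sign_mul_det_shiftedJacobiTrudi,
    mul_div_mul_left _ _ hsign, det_shiftedJacobiTrudi_hSpec_eq_mul hq hqm,
    mul_div_cancel_left₀ _ (det_shiftedJacobiTrudi_hSpec_zero_ne_zero hq hqm hmono L)]
  rfl

open Finset in
/-- For any partition `λ` (at most `L` parts) and parameters `q, a` (with `Q = q^a`),
the ratio `s_λ(t(a,q)) / s_λ(t(∞,q))` equals the q-content product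
`(q^a;q)_λ = ∏_{(i,j)∈λ} (1 - q^{a+j-i})`.  Here `h_k(t(a,q)) = (q^a;q)_k/(q;q)_k`
and `h_k(t(∞,q)) = 1/(q;q)_k`. -/
theorem schur_ratio_q_content_product (p : ℕ → ℕ) (L : ℕ)
    (hmono : ∀ i j, 1 ≤ i → i ≤ j → p j ≤ p i) (hL : ∀ i, L < i → p i = 0)
    (q Q : ℂ) (hq : q ≠ 0) (hqm : ∀ m : ℕ, 1 ≤ m → q ^ m ≠ 1) :
    schurDet (fun k => qPoch Q q k / qPoch q q k) p L /
      schurDet (fun k => (qPoch q q k)⁻¹) p L =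
      ∏ i ∈ Icc 1 L, ∏ j ∈ Icc 1 (p i), (1 - Q * q ^ ((j : ℤ) - (i : ℤ))) :=
  schur_ratio_q_content_product_general p L hmono q Q hq hqm
end

section
/- Fermionic vacuum expectation formula: for the free fermion fields ψ(z) = Σ_m ψ_m z^m and ψ*(z) = Σ_m ψ*_m z^{-m-1} and distinct nonzero complex numbers z₁,…,z_k, z_{-1},…,z_{-k}, the expectation ⟨n| ψ(z₁)⋯ψ(z_k) ψ*(z_{-1})⋯ψ*(z_{-k}) |n⟩ = ∏_{i=1}^k (z_i/z_{-i})^n · ∏_{i<j}(z_i - z_j)(z_{-i} - z_{-j}) / ∏_{i,j}(z_i - z_{-j}). -/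
/-!
Factoring `zᵢⁿ` out of the rows and `w_j⁻ⁿ` out of the columns leaves the Cauchy determinant
`det (1 / (zᵢ - w_j))`. One step of Gaussian elimination on the pivot `(x₀ - y₀)⁻¹`
of a Cauchy matrix leaves as Schur complement the Cauchy matrix of the remaining variables with
rows scaled by `(xᵢ - x₀) / (xᵢ - y₀)` and columns by `(y₀ - y_j) / (x₀ - y_j)`; this gives Cauchy's formula by induction. Reversing the `k(k-1)/2` factors
`z_j - zᵢ` cancels the Wick sign.
-/

open Finset

namespace Matrix

variable {K : Type*} [Field K]

theorem det_succ_eq_mul_det_schur {k : ℕ} (M : Matrix (Fin (k + 1)) (Fin (k + 1)) K)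
    (h : M 0 0 ≠ 0) :
    M.det = M 0 0 *
      det (of fun i j : Fin k => M i.succ j.succ - M i.succ 0 / M 0 0 * M 0 j.succ) := by
  set c : Fin (k + 1) → K := Fin.cons 0 fun i => -(M i.succ 0 / M 0 0)
  set B : Matrix (Fin (k + 1)) (Fin (k + 1)) K := of fun i j => M i j + c i * M 0 j
  have hB : M.det = B.det :=
    (det_eq_of_forall_row_eq_smul_add_const (A := B) c 0 rfl fun i j => by simp [B, c]).symm
  have hcol : ∀ i : Fin k, B i.succ 0 = 0 := fun i => by simp [B, c, h]
  rw [hB, det_succ_column_zero, Fin.sum_univ_succ]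
  simp only [hcol, mul_zero, zero_mul, sum_const_zero, add_zero]
  simp [B, c, submatrix, sub_eq_add_neg]

def cauchyMatrix {m n : Type*} (x : m → K) (y : n → K) : Matrix m n K :=
  of fun i j => (x i - y j)⁻¹

section Cauchy

variable {k : ℕ}

theorem schur_cauchyMatrix {x y : Fin (k + 1) → K} (hxy : ∀ i j, x i ≠ y j) :
    (of fun i j : Fin k => cauchyMatrix x y i.succ j.succ -
        cauchyMatrix x y i.succ 0 / cauchyMatrix x y 0 0 * cauchyMatrix x y 0 j.succ) =
      of fun i j => (x i.succ - x 0) / (x i.succ - y 0) *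
        of (fun i j => (y 0 - y j.succ) / (x 0 - y j.succ) *
          cauchyMatrix (x ∘ Fin.succ) (y ∘ Fin.succ) i j) i j := by
  have hsub : ∀ i j, x i - y j ≠ 0 := fun i j => sub_ne_zero.mpr (hxy i j)
  ext i j
  simp only [cauchyMatrix, of_apply, Function.comp_apply]
  field_simp [hsub]
  ring

theorem det_cauchyMatrix_succ {x y : Fin (k + 1) → K} (hxy : ∀ i j, x i ≠ y j) :
    (cauchyMatrix x y).det = (x 0 - y 0)⁻¹ *
      ((∏ i : Fin k, (x i.succ - x 0) / (x i.succ - y 0)) *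
        ((∏ j : Fin k, (y 0 - y j.succ) / (x 0 - y j.succ)) *
          (cauchyMatrix (x ∘ Fin.succ) (y ∘ Fin.succ)).det)) := by
  rw [det_succ_eq_mul_det_schur _ (inv_ne_zero (sub_ne_zero.mpr (hxy 0 0))),
    schur_cauchyMatrix hxy, det_mul_column, det_mul_row]
  rfl

theorem det_cauchyMatrix {x y : Fin k → K} (hxy : ∀ i j, x i ≠ y j) :
    (cauchyMatrix x y).det =
      (∏ i, ∏ j ∈ Ioi i, (x j - x i) * (y i - y j)) / ∏ i, ∏ j, (x i - y j) := by
  induction k with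
  | zero => simp
  | succ k ih =>
    have hsub : ∀ i j, x i - y j ≠ 0 := fun i j => sub_ne_zero.mpr (hxy i j)
    rw [det_cauchyMatrix_succ hxy,
      ih (x := x ∘ Fin.succ) (y := y ∘ Fin.succ) fun i j => hxy i.succ j.succ,
      Fin.prod_univ_succ, Fin.prod_Ioi_zero, Fin.prod_univ_succ, Fin.prod_univ_succ]
    simp only [Fin.prod_Ioi_succ, Fin.prod_univ_succ (fun j => x _ - y j), prod_mul_distrib,
      Function.comp_apply, prod_div_distrib]
    field_simp [hsub]

end Cauchy

end Matrix

theorem Fin.prod_Ioi_neg {M : Type*} [CommMonoid M] [HasDistribNeg M] {k : ℕ}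
    (f : Fin k → Fin k → M) :
    ∏ i, ∏ j ∈ Ioi i, -f i j = (-1) ^ (k * (k - 1) / 2) * ∏ i, ∏ j ∈ Ioi i, f i j := by
  have hcard : ∑ i : Fin k, #(Ioi i) = k * (k - 1) / 2 := by
    rw [sum_congr rfl fun i _ => Fin.card_Ioi i,
      Fin.sum_univ_eq_sum_range (fun i => k - 1 - i), sum_range_reflect (fun i => i), sum_range_id]
  simp only [prod_neg, prod_mul_distrib, prod_pow_eq_pow_sum, hcard]

open Finset in
theorem fermionic_vev_product_formula_general (k : ℕ) (n : ℤ) (z w : Fin k → ℂ)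
    (hzw : ∀ i j, z i ≠ w j) :
    (-1 : ℂ) ^ (k * (k - 1) / 2) *
      Matrix.det (Matrix.of fun i j : Fin k => (z i / w j) ^ n / (z i - w j)) =
      (∏ i : Fin k, (z i / w i) ^ n) *
      (∏ i : Fin k, ∏ j ∈ Finset.univ.filter (fun j : Fin k => i < j),
        ((z i - z j) * (w i - w j))) /
      (∏ i : Fin k, ∏ j : Fin k, (z i - w j)) := by
  have hfactor : (Matrix.of fun i j : Fin k => (z i / w j) ^ n / (z i - w j)) =
      Matrix.of fun i j => z i ^ n *
        Matrix.of (fun i j => (w j ^ n)⁻¹ * Matrix.cauchyMatrix z w i j) i j := by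
    ext i j
    simp only [Matrix.cauchyMatrix, Matrix.of_apply, div_eq_mul_inv, mul_zpow, inv_zpow, mul_assoc]
  have hpow : ∏ i, (z i / w i) ^ n = (∏ i, z i ^ n) * ∏ i, (w i ^ n)⁻¹ := by
    simp only [← prod_mul_distrib, div_eq_mul_inv, mul_zpow, inv_zpow]
  have hsign : ∏ i : Fin k, ∏ j ∈ Ioi i, (z j - z i) * (w i - w j) =
      (-1) ^ (k * (k - 1) / 2) * ∏ i : Fin k, ∏ j ∈ Ioi i, (z i - z j) * (w i - w j) := by
    rw [← Fin.prod_Ioi_neg]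
    simp only [neg_mul_eq_neg_mul, neg_sub]
  have hsq : ((-1 : ℂ) ^ (k * (k - 1) / 2)) ^ 2 = 1 := by
    rw [← pow_mul, mul_comm, pow_mul, neg_one_sq, one_pow]
  rw [hfactor, Matrix.det_mul_column, Matrix.det_mul_row, Matrix.det_cauchyMatrix hzw, hsign, hpow]
  simp only [filter_lt_eq_Ioi]
  linear_combination (∏ i, z i ^ n) * (∏ i, (w i ^ n)⁻¹) *
    (∏ i : Fin k, ∏ j ∈ Ioi i, (z i - z j) * (w i - w j)) *
    (∏ i : Fin k, ∏ j : Fin k, (z i - w j))⁻¹ * hsq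

open Finset in
/-- Fermionic vacuum expectation formula.  By the Wick rule, the expectation
`⟨n| ψ(z₁)⋯ψ(z_k) ψ*(w₁)⋯ψ*(w_k) |n⟩` (with `w_j = z_{-j}`) equals
`(-1)^{k(k-1)/2} det(⟨n|ψ(z_i)ψ*(w_j)|n⟩)` where the two-point function is the
rational function `⟨n|ψ(z)ψ*(w)|n⟩ = (z/w)^n / (z - w)`.  The claim is that this
equals `∏_i (z_i/w_i)^n · ∏_{i<j} (z_i - z_j)(w_i - w_j) / ∏_{i,j} (z_i - w_j)`. -/
theorem fermionic_vev_product_formula (k : ℕ) (n : ℤ) (z w : Fin k → ℂ)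
    (hz0 : ∀ i, z i ≠ 0) (hw0 : ∀ i, w i ≠ 0)
    (hzz : ∀ i j, i ≠ j → z i ≠ z j) (hww : ∀ i j, i ≠ j → w i ≠ w j)
    (hzw : ∀ i j, z i ≠ w j) :
    (-1 : ℂ) ^ (k * (k - 1) / 2) *
      Matrix.det (Matrix.of fun i j : Fin k => (z i / w j) ^ n / (z i - w j)) =
      (∏ i : Fin k, (z i / w i) ^ n) *
      (∏ i : Fin k, ∏ j ∈ Finset.univ.filter (fun j : Fin k => i < j),
        ((z i - z j) * (w i - w j))) /
      (∏ i : Fin k, ∏ j : Fin k, (z i - w j)) :=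
  fermionic_vev_product_formula_general k n z w hzw
end
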